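/- Let (X, cl) be a finitary matroid (pregeometry) and δ : X → X a quasi-endomorphism, meaning rk(δA | A ∪ B ∪ δB) ≤ rk(A | B) for all A, B ⊆ X. Define a ∈ cl^δ(B) iff rk(J^∞(a) | J^∞(B)) < ℵ₀, where J^∞(a) = {δⁱa : i < ω} and J^∞(B) = ∪_{b∈B} J^∞(b). Then (X, cl^δ) is again a finitary matroid (pregeometry). -/

import Mathlib

/-!
For a finite set `F` and a `δ`-invariant base `C`, the increments `rk(δⁿF | C ∪ J^{<n}F)` are
non-increasing in `n`: this is the quasi-endomorphism inequality with `A = δⁿF` and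
`B = C ∪ J^{<n}F`. Hence `a ∈ cl^δ(B)` exactly when some `δⁿa` falls into
`cl(J^∞B ∪ J^{<n}a)`, and then the whole jet of `a` does; finitarity and idempotence follow.

For exchange put `C = J^∞A`. If `a ∉ cl^δ(A)`, every `J^{<n}a` is independent over `C`. If
`a ∈ cl^δ(A ∪ {b})`, the increments of `{a, b}` over `C` cannot stay at `2`, so eventually they
are at most `1` and `rk(J^{<n}{a, b} | C)` grows by at most `n`. Since it equals
`n + rk(J^{<n}b | C ∪ J^{<n}a)`, the latter stays bounded, so `b ∈ cl^δ(A ∪ {a})`.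
-/

/-- A finitary matroid (pregeometry) on a type `X`, given by a closure operator. -/
structure Pregeometry (X : Type*) where
  cl : Set X → Set X
  subset_cl : ∀ A : Set X, A ⊆ cl A
  mono : ∀ A B : Set X, A ⊆ B → cl A ⊆ cl B
  cl_cl : ∀ A : Set X, cl (cl A) = cl A
  finitary : ∀ (A : Set X) (a : X), a ∈ cl A → ∃ F : Finset X, ↑F ⊆ A ∧ a ∈ cl ↑F
  exchange : ∀ (a b : X) (A : Set X), a ∈ cl (A ∪ {b}) → a ∉ cl A → b ∈ cl (A ∪ {a})

/-- `S` is independent over `B` with respect to a closure operator. -/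
def clIndep {X : Type*} (cl : Set X → Set X) (B S : Set X) : Prop :=
  ∀ s ∈ S, s ∉ cl (B ∪ (S \ {s}))

/-- The rank of `A` over `B` with respect to a closure operator: the supremum of the
cardinalities of subsets of `A` independent over `B`. -/
noncomputable def clRank {X : Type*} (cl : Set X → Set X) (A B : Set X) : Cardinal :=
  ⨆ S : {S : Set X // S ⊆ A ∧ clIndep cl B S}, Cardinal.mk S.1

/-- The set of all iterated images `δⁱ a` for `a ∈ A`, `i < ω` (the infinite jet). -/
def Jinf {X : Type*} (δ : X → X) (A : Set X) : Set X :=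
  ⋃ a ∈ A, Set.range fun i : ℕ => δ^[i] a

/-- The jet `{δⁱ a : a ∈ A, i ≤ n}`. -/
def Jle {X : Type*} (δ : X → X) (A : Set X) (n : ℕ) : Set X :=
  ⋃ a ∈ A, (fun i : ℕ => δ^[i] a) '' {i | i ≤ n}

/-- The jet `{δⁱ a : a ∈ A, i < n}` (so `Jlt δ A 0 = ∅`, playing the role of `J^{-1}`). -/
def Jlt {X : Type*} (δ : X → X) (A : Set X) (n : ℕ) : Set X :=
  ⋃ a ∈ A, (fun i : ℕ => δ^[i] a) '' {i | i < n}

/-- `δ` is a quasi-endomorphism of the pregeometry `P`: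
`rk(δA | A ∪ B ∪ δB) ≤ rk(A | B)` for all `A, B`. -/
def IsQuasiEndo {X : Type*} (P : Pregeometry X) (δ : X → X) : Prop :=
  ∀ A B : Set X, clRank P.cl (δ '' A) (A ∪ B ∪ δ '' B) ≤ clRank P.cl A B

/-- The `δ`-closure operator: `a ∈ cl^δ(B)` iff `rk(J^∞(a) | J^∞(B))` is finite. -/
noncomputable def clDelta {X : Type*} (P : Pregeometry X) (δ : X → X) : Set X → Set X :=
  fun B => {a | clRank P.cl (Jinf δ {a}) (Jinf δ B) < Cardinal.aleph0}

open Set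

namespace Pregeometry

variable {X : Type*} (P : Pregeometry X) {A B C S T W : Set X} {x : X}

lemma cl_subset_cl (h : A ⊆ P.cl B) : P.cl A ⊆ P.cl B :=
  (P.mono _ _ h).trans_eq (P.cl_cl B)

lemma clIndep_empty : clIndep P.cl C ∅ := fun _ h => absurd h (notMem_empty _)

lemma clIndep_anti_base {C' : Set X} (h : clIndep P.cl C' S) (hC : C ⊆ C') :
    clIndep P.cl C S := fun s hs hcl =>
  h s hs (P.mono _ _ (union_subset_union_left _ hC) hcl)

lemma clIndep_subset (h : clIndep P.cl C S) (hT : T ⊆ S) : clIndep P.cl C T := fun t ht hcl =>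
  h t (hT ht) (P.mono _ _ (union_subset_union_right _ (sdiff_subset_sdiff_left hT)) hcl)

lemma clIndep_singleton (hx : x ∉ P.cl C) : clIndep P.cl C {x} := by
  rintro s rfl
  simpa using hx

lemma clIndep_insert (h : clIndep P.cl C S) (hx : x ∉ P.cl (C ∪ S)) :
    clIndep P.cl C (insert x S) := by
  have hxS : x ∉ S := fun hxS => hx (P.subset_cl _ (Or.inr hxS))
  rintro s (rfl | hs) hcl
  · rw [insert_sdiff_self_of_notMem hxS] at hcl
    exact hx hcl
  · have hsx : x ∉ ({s} : Set X) := fun h => hxS (h ▸ hs)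
    rw [insert_sdiff_of_notMem _ hsx, union_insert, ← union_singleton] at hcl
    have hxs := P.exchange s x _ hcl (h s hs)
    refine hx (P.cl_subset_cl (union_subset ?_ ?_) hxs)
    · exact (union_subset_union_right _ sdiff_subset).trans (P.subset_cl _)
    · exact singleton_subset_iff.2 (P.subset_cl _ (Or.inr hs))

lemma clIndep_union (hS : clIndep P.cl C S) (hT : clIndep P.cl (C ∪ S) T) (hTfin : T.Finite) :
    clIndep P.cl C (S ∪ T) := by
  induction T, hTfin using Set.Finite.induction_on with
  | empty => simpa using hS
  | @insert t T htT _ ih =>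
    rw [union_insert]
    refine P.clIndep_insert (ih (P.clIndep_subset hT (subset_insert _ _))) ?_
    have := hT t (mem_insert _ _)
    rwa [insert_sdiff_self_of_notMem htT, union_assoc] at this

lemma clIndep_iUnion_of_directed {ι : Type*} [Nonempty ι] {D : ι → Set X}
    (hD : Directed (· ⊆ ·) D) (h : ∀ i, clIndep P.cl (D i) S) : clIndep P.cl (⋃ i, D i) S := by
  classical
  intro s hs hcl
  obtain ⟨G, hG, hsG⟩ := P.finitary _ _ hcl
  obtain ⟨i, hi⟩ := hD.exists_mem_subset_of_finset_subset_biUnion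
    (s := G.filter (· ∈ ⋃ i, D i)) fun y hy => (Finset.mem_filter.1 hy).2
  refine h i s hs (P.mono _ _ (fun y hy => ?_) hsG)
  rcases hG hy with hyD | hyS
  · exact Or.inl (hi (Finset.mem_filter.2 ⟨hy, hyD⟩))
  · exact Or.inr hyS

lemma ncard_le_of_subset_cl (hW : W.Finite) (hS : S.Finite) (hi : clIndep P.cl C S)
    (hSW : S ⊆ P.cl (C ∪ W)) : S.ncard ≤ W.ncard := by
  induction W, hW using Set.Finite.induction_on generalizing C S with
  | empty =>
    obtain rfl : S = ∅ := eq_empty_of_forall_notMem fun s hs =>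
      hi s hs (P.mono _ _ subset_union_left (by simpa using hSW hs))
    simp
  | @insert w W hwW hW ih =>
    by_cases hSW' : S ⊆ P.cl (C ∪ W)
    · exact (ih hS hi hSW').trans (ncard_le_ncard (subset_insert _ _) (hW.insert w))
    obtain ⟨s, hs, hsW⟩ := not_subset.1 hSW'
    -- `s` takes the place of `w` in the spanning set
    have hw : w ∈ P.cl ((C ∪ W) ∪ {s}) :=
      P.exchange s w _ (by rw [union_singleton, ← union_insert]; exact hSW hs) hsW
    have hspan : S \ {s} ⊆ P.cl ((C ∪ {s}) ∪ W) := by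
      refine sdiff_subset.trans (hSW.trans (P.cl_subset_cl ?_))
      rw [union_insert, insert_subset_iff]
      refine ⟨P.mono _ _ (by rw [union_right_comm]) hw, ?_⟩
      exact (union_subset_union_left _ subset_union_left).trans (P.subset_cl _)
    have hi' : clIndep P.cl (C ∪ {s}) (S \ {s}) := fun u hu hcl =>
      hi u hu.1 (P.mono _ _ (fun y hy => by aesop) hcl)
    have := ih hS.sdiff hi' hspan
    have := ncard_sdiff_singleton_add_one hs hS
    rw [ncard_insert_of_notMem hwW hW]
    omega

/-- Only meaningful for finite `A`: otherwise the sizes may be unbounded and `sSup` is junk `0`. -/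
noncomputable def rk (A C : Set X) : ℕ :=
  sSup {n | ∃ S ⊆ A, clIndep P.cl C S ∧ S.ncard = n}

lemma rk_sizes_bddAbove (hA : A.Finite) :
    BddAbove {n | ∃ S ⊆ A, clIndep P.cl C S ∧ S.ncard = n} :=
  ⟨A.ncard, by rintro _ ⟨S, hS, -, rfl⟩; exact ncard_le_ncard hS hA⟩

lemma rk_sizes_nonempty : {n | ∃ S ⊆ A, clIndep P.cl C S ∧ S.ncard = n}.Nonempty :=
  ⟨0, ∅, empty_subset _, P.clIndep_empty, ncard_empty X⟩

lemma le_rk (hA : A.Finite) (hS : S ⊆ A) (hi : clIndep P.cl C S) : S.ncard ≤ P.rk A C :=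
  le_csSup (P.rk_sizes_bddAbove hA) ⟨S, hS, hi, rfl⟩

lemma rk_le_of_subset_cl (hA : A.Finite) (hW : W.Finite) (hAW : A ⊆ P.cl (C ∪ W)) :
    P.rk A C ≤ W.ncard :=
  csSup_le P.rk_sizes_nonempty <| by
    rintro _ ⟨S, hS, hi, rfl⟩
    exact P.ncard_le_of_subset_cl hW (hA.subset hS) hi (hS.trans hAW)

lemma rk_le_ncard (hA : A.Finite) : P.rk A C ≤ A.ncard :=
  P.rk_le_of_subset_cl hA hA (subset_union_right.trans (P.subset_cl _))

lemma exists_basis (hA : A.Finite) :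
    ∃ S ⊆ A, clIndep P.cl C S ∧ S.ncard = P.rk A C ∧ A ⊆ P.cl (C ∪ S) := by
  obtain ⟨S, hSA, hi, hS⟩ : P.rk A C ∈ _ :=
    Nat.sSup_mem P.rk_sizes_nonempty (P.rk_sizes_bddAbove hA)
  refine ⟨S, hSA, hi, hS, fun y hy => ?_⟩
  by_contra hyS
  have hyS' : y ∉ S := fun h => hyS (P.subset_cl _ (Or.inr h))
  have := P.le_rk hA (insert_subset hy hSA) (P.clIndep_insert hi hyS)
  rw [ncard_insert_of_notMem hyS' (hA.subset hSA), hS] at this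
  omega

lemma clIndep_of_ncard_le_rk (hA : A.Finite) (h : A.ncard ≤ P.rk A C) : clIndep P.cl C A := by
  obtain ⟨S, hSA, hi, hS, -⟩ := P.exists_basis (C := C) hA
  rwa [← eq_of_subset_of_ncard_le hSA (h.trans hS.ge) hA]

lemma rk_mono (hB : B.Finite) (h : A ⊆ B) : P.rk A C ≤ P.rk B C := by
  obtain ⟨S, hSA, hi, hS, -⟩ := P.exists_basis (C := C) (hB.subset h)
  exact hS ▸ P.le_rk hB (hSA.trans h) hi

lemma rk_anti_base {C' : Set X} (hA : A.Finite) (h : C ⊆ C') : P.rk A C' ≤ P.rk A C := by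
  obtain ⟨S, hSA, hi, hS, -⟩ := P.exists_basis (C := C') hA
  exact hS ▸ P.le_rk hA hSA (P.clIndep_anti_base hi h)

lemma rk_singleton_eq_zero_iff : P.rk {x} C = 0 ↔ x ∈ P.cl C := by
  refine ⟨fun h => ?_, fun hx => ?_⟩
  · by_contra hx
    have := P.le_rk (finite_singleton x) subset_rfl (P.clIndep_singleton hx)
    simp [h] at this
  · simpa using P.rk_le_of_subset_cl (finite_singleton x) finite_empty (W := ∅) (by simpa using hx)

/-- A basis of `B` over `C` together with a basis of `A` over `C ∪ B` is a basis of `A ∪ B`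
over `C`. -/
lemma rk_union (hA : A.Finite) (hB : B.Finite) :
    P.rk (A ∪ B) C = P.rk B C + P.rk A (C ∪ B) := by
  obtain ⟨SB, hSB, hiB, hcB, hspB⟩ := P.exists_basis (C := C) hB
  obtain ⟨SA, hSA, hiA, hcA, hspA⟩ := P.exists_basis (C := C ∪ B) hA
  have hfin : (SB ∪ SA).Finite := (hB.subset hSB).union (hA.subset hSA)
  have hcard : (SB ∪ SA).ncard = P.rk B C + P.rk A (C ∪ B) := by
    have hdisj : Disjoint SB SA := disjoint_left.2 fun y hyB hyA =>
      hiA y hyA (P.subset_cl _ (Or.inl (Or.inr (hSB hyB))))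
    rw [ncard_union_eq hdisj (hB.subset hSB) (hA.subset hSA), hcB, hcA]
  refine le_antisymm ?_ ?_
  · have hBspan : B ⊆ P.cl (C ∪ (SB ∪ SA)) :=
      hspB.trans (P.mono _ _ (union_subset_union_right _ subset_union_left))
    have hAspan : A ⊆ P.cl (C ∪ (SB ∪ SA)) := by
      refine hspA.trans (P.cl_subset_cl (union_subset (union_subset ?_ hBspan) ?_))
      · exact subset_union_left.trans (P.subset_cl _)
      · exact (subset_union_right.trans subset_union_right).trans (P.subset_cl _)
    exact hcard ▸ P.rk_le_of_subset_cl (hA.union hB) hfin (union_subset hAspan hBspan)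
  · have hi : clIndep P.cl C (SB ∪ SA) :=
      P.clIndep_union hiB (P.clIndep_anti_base hiA (union_subset_union_right _ hSB)) (hA.subset hSA)
    exact hcard ▸ P.le_rk (hA.union hB)
      (union_subset (hSB.trans subset_union_right) (hSA.trans subset_union_left)) hi

lemma le_clRank (hS : S ⊆ A) (hi : clIndep P.cl C S) : Cardinal.mk S ≤ clRank P.cl A C :=
  le_ciSup (f := fun S : {S : Set X // S ⊆ A ∧ clIndep P.cl C S} => Cardinal.mk S.1)
    Cardinal.bddAbove_of_small ⟨S, hS, hi⟩

lemma clRank_eq_rk (hA : A.Finite) : clRank P.cl A C = P.rk A C := by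
  refine le_antisymm (ciSup_le' fun ⟨S, hS, hi⟩ => ?_) ?_
  · rw [← Set.cast_ncard (hA.subset hS)]
    exact_mod_cast P.le_rk hA hS hi
  · obtain ⟨S, hSA, hi, hS, -⟩ := P.exists_basis (C := C) hA
    rw [← hS, Set.cast_ncard (hA.subset hSA)]
    exact P.le_clRank hSA hi

lemma clRank_lt_aleph0_iff : clRank P.cl A C < Cardinal.aleph0 ↔
    ∃ K : ℕ, ∀ S ⊆ A, clIndep P.cl C S → S.Finite → S.ncard ≤ K := by
  refine ⟨fun h => ?_, fun ⟨K, hK⟩ => ?_⟩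
  · obtain ⟨K, hK⟩ := Cardinal.lt_aleph0.1 h
    refine ⟨K, fun S hS hi hSfin => ?_⟩
    have := P.le_clRank hS hi
    rwa [hK, ← Set.cast_ncard hSfin, Nat.cast_le] at this
  refine (ciSup_le' fun ⟨S, hS, hi⟩ => ?_).trans_lt (Cardinal.natCast_lt_aleph0 (n := K))
  have hSfin : S.Finite := by
    by_contra hinf
    obtain ⟨T, hTS, hTfin, hTcard⟩ := Set.Infinite.exists_subset_ncard_eq hinf (K + 1)
    have := hK T (hTS.trans hS) (P.clIndep_subset hi hTS) hTfin
    omega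
  rw [← Set.cast_ncard hSfin]
  exact_mod_cast hK S hS hi hSfin

lemma clRank_lt_aleph0_of_subset_cl (hW : W.Finite) (h : A ⊆ P.cl (C ∪ W)) :
    clRank P.cl A C < Cardinal.aleph0 :=
  P.clRank_lt_aleph0_iff.2
    ⟨W.ncard, fun _ hS hi hSfin => P.ncard_le_of_subset_cl hW hSfin hi (hS.trans h)⟩

end Pregeometry

section Jets

variable {X : Type*} (δ : X → X) {A B G : Set X}

@[simp] lemma mem_Jlt {n : ℕ} {x : X} : x ∈ Jlt δ A n ↔ ∃ a ∈ A, ∃ i < n, δ^[i] a = x := by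
  simp [Jlt]

@[simp] lemma mem_Jinf {x : X} : x ∈ Jinf δ A ↔ ∃ a ∈ A, ∃ i, δ^[i] a = x := by
  simp [Jinf]

@[simp] lemma Jlt_zero (A : Set X) : Jlt δ A 0 = ∅ := by
  ext; simp

lemma Jlt_succ (A : Set X) (n : ℕ) : Jlt δ A (n + 1) = δ^[n] '' A ∪ Jlt δ A n := by
  ext x
  simp only [mem_Jlt, mem_union, mem_image, Nat.lt_succ_iff_lt_or_eq]
  aesop

lemma Jlt_mono (A : Set X) : Monotone (Jlt δ A) := fun _ _ hmn x hx => by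
  obtain ⟨a, ha, i, hi, rfl⟩ := (mem_Jlt δ).1 hx
  exact (mem_Jlt δ).2 ⟨a, ha, i, hi.trans_le hmn, rfl⟩

lemma Jlt_union (A B : Set X) (n : ℕ) : Jlt δ (A ∪ B) n = Jlt δ A n ∪ Jlt δ B n :=
  biUnion_union A B _

lemma Jlt_pair (a b : X) (n : ℕ) : Jlt δ {a, b} n = Jlt δ {a} n ∪ Jlt δ {b} n := by
  rw [insert_eq, Jlt_union]

lemma Jlt_finite (hA : A.Finite) (n : ℕ) : (Jlt δ A n).Finite :=
  hA.biUnion fun _ _ => (finite_Iio n).image _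

lemma ncard_Jlt_singleton_le (a : X) (n : ℕ) : (Jlt δ {a} n).ncard ≤ n := by
  rw [Jlt, biUnion_singleton]
  exact (ncard_image_le (finite_Iio n)).trans_eq (by simp)

lemma image_Jlt_subset (A : Set X) (n : ℕ) : δ '' Jlt δ A n ⊆ Jlt δ A (n + 1) := by
  rintro _ ⟨_, hx, rfl⟩
  obtain ⟨a, ha, i, hi, rfl⟩ := (mem_Jlt δ).1 hx
  exact (mem_Jlt δ).2 ⟨a, ha, i + 1, by omega, Function.iterate_succ_apply' δ i a⟩

lemma iUnion_Jlt (A : Set X) : ⋃ n, Jlt δ A n = Jinf δ A := by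
  ext x
  simp only [mem_iUnion, mem_Jlt, mem_Jinf]
  exact ⟨fun ⟨_, a, ha, i, _, hx⟩ => ⟨a, ha, i, hx⟩,
    fun ⟨a, ha, i, hx⟩ => ⟨i + 1, a, ha, i, i.lt_succ_self, hx⟩⟩

lemma Jlt_subset_Jinf (A : Set X) (n : ℕ) : Jlt δ A n ⊆ Jinf δ A :=
  iUnion_Jlt δ A ▸ subset_iUnion (Jlt δ A) n

lemma exists_subset_Jlt (hG : G.Finite) (h : G ⊆ Jinf δ A) : ∃ n, G ⊆ Jlt δ A n := by
  rw [← hG.coe_toFinset] at h ⊢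
  exact (Jlt_mono δ A).directed_le.exists_mem_subset_of_finset_subset_biUnion
    (h.trans (iUnion_Jlt δ A).ge)

lemma Jinf_mono (h : A ⊆ B) : Jinf δ A ⊆ Jinf δ B :=
  biUnion_subset_biUnion_left h

lemma Jinf_union (A B : Set X) : Jinf δ (A ∪ B) = Jinf δ A ∪ Jinf δ B :=
  biUnion_union A B _

lemma image_Jinf_subset (A : Set X) : δ '' Jinf δ A ⊆ Jinf δ A := by
  rw [← iUnion_Jlt, image_iUnion]
  exact iUnion_subset fun n => (image_Jlt_subset δ A n).trans (subset_iUnion _ _)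

lemma exists_finset_subset_Jinf (hG : G.Finite) (h : G ⊆ Jinf δ B) :
    ∃ F : Finset X, ↑F ⊆ B ∧ G ⊆ Jinf δ ↑F := by
  classical
  choose! b hbB hb using fun g (hg : g ∈ G) => (mem_Jinf δ).1 (h hg)
  refine ⟨hG.toFinset.image b, by simpa [subset_def] using hbB, fun g hg => ?_⟩
  exact (mem_Jinf δ).2 ⟨b g, by simpa using ⟨g, hg, rfl⟩, hb g hg⟩

end Jets

namespace Pregeometry

variable {X : Type*} (P : Pregeometry X) {δ : X → X} {A B C F : Set X} {a b : X}

lemma rk_image_le (hδ : IsQuasiEndo P δ) (hA : A.Finite) :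
    P.rk (δ '' A) (A ∪ B ∪ δ '' B) ≤ P.rk A B := by
  have := hδ A B
  rwa [P.clRank_eq_rk (hA.image δ), P.clRank_eq_rk hA, Nat.cast_le] at this

noncomputable def jetInc (δ : X → X) (C F : Set X) (n : ℕ) : ℕ :=
  P.rk (δ^[n] '' F) (C ∪ Jlt δ F n)

lemma rk_Jlt_succ (hF : F.Finite) (n : ℕ) :
    P.rk (Jlt δ F (n + 1)) C = P.rk (Jlt δ F n) C + P.jetInc δ C F n := by
  rw [Jlt_succ, P.rk_union (hF.image _) (Jlt_finite δ hF n), jetInc]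

lemma jetInc_succ_le (hδ : IsQuasiEndo P δ) (hC : δ '' C ⊆ C) (hF : F.Finite) (n : ℕ) :
    P.jetInc δ C F (n + 1) ≤ P.jetInc δ C F n := by
  have hsub : δ^[n] '' F ∪ (C ∪ Jlt δ F n) ∪ δ '' (C ∪ Jlt δ F n) ⊆ C ∪ Jlt δ F (n + 1) := by
    rw [image_union, Jlt_succ]
    refine union_subset (union_subset (subset_union_left.trans subset_union_right) ?_)
      (union_subset (hC.trans subset_union_left) ((image_Jlt_subset δ F n).trans ?_))
    · exact union_subset_union_right _ subset_union_right
    · rw [Jlt_succ]; exact subset_union_right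
  calc P.jetInc δ C F (n + 1) = P.rk (δ '' (δ^[n] '' F)) (C ∪ Jlt δ F (n + 1)) := by
        rw [jetInc, image_image, Function.iterate_succ']; rfl
    _ ≤ P.rk (δ '' (δ^[n] '' F)) (δ^[n] '' F ∪ (C ∪ Jlt δ F n) ∪ δ '' (C ∪ Jlt δ F n)) :=
        P.rk_anti_base ((hF.image _).image δ) hsub
    _ ≤ P.jetInc δ C F n := P.rk_image_le hδ (hF.image _)

lemma jetInc_antitone (hδ : IsQuasiEndo P δ) (hC : δ '' C ⊆ C) (hF : F.Finite) :
    Antitone (P.jetInc δ C F) :=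
  antitone_nat_of_succ_le (P.jetInc_succ_le hδ hC hF)

lemma jetInc_singleton_eq_zero_iff {n : ℕ} :
    P.jetInc δ C {a} n = 0 ↔ δ^[n] a ∈ P.cl (C ∪ Jlt δ {a} n) := by
  rw [jetInc, image_singleton, rk_singleton_eq_zero_iff]

lemma Jinf_subset_cl_of_iterate_mem_cl (hδ : IsQuasiEndo P δ) (hC : δ '' C ⊆ C) {n : ℕ}
    (h : δ^[n] a ∈ P.cl (C ∪ Jlt δ {a} n)) : Jinf δ {a} ⊆ P.cl (C ∪ Jlt δ {a} n) := by
  rw [← iUnion_Jlt]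
  refine iUnion_subset fun m => ?_
  induction m with
  | zero => simp
  | succ m ih =>
    rw [Jlt_succ, image_singleton, singleton_union, insert_subset_iff]
    refine ⟨?_, ih⟩
    rcases le_or_gt n m with hnm | hmn
    · have hm : P.jetInc δ C {a} m = 0 := Nat.le_zero.1 <|
        (P.jetInc_antitone hδ hC (finite_singleton a) hnm).trans
          (P.jetInc_singleton_eq_zero_iff.2 h).le
      exact P.cl_subset_cl (union_subset (subset_union_left.trans (P.subset_cl _)) ih)
        (P.jetInc_singleton_eq_zero_iff.1 hm)
    · exact P.subset_cl _ (Or.inr ((mem_Jlt δ).2 ⟨a, rfl, m, hmn, rfl⟩))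

lemma clIndep_Jlt_of_forall_iterate_notMem (h : ∀ n, δ^[n] a ∉ P.cl (C ∪ Jlt δ {a} n))
    (n : ℕ) : clIndep P.cl C (Jlt δ {a} n) ∧ (Jlt δ {a} n).ncard = n := by
  induction n with
  | zero => simpa using P.clIndep_empty
  | succ n ih =>
    rw [Jlt_succ, image_singleton, singleton_union]
    have hnotMem : δ^[n] a ∉ Jlt δ {a} n := fun hm => h n (P.subset_cl _ (Or.inr hm))
    refine ⟨P.clIndep_insert ih.1 (h n), ?_⟩
    rw [ncard_insert_of_notMem hnotMem (Jlt_finite δ (finite_singleton a) n), ih.2]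

lemma mem_clDelta : a ∈ clDelta P δ B ↔ clRank P.cl (Jinf δ {a}) (Jinf δ B) < Cardinal.aleph0 :=
  Iff.rfl

lemma mem_clDelta_iff_exists_iterate_mem_cl (hδ : IsQuasiEndo P δ) :
    a ∈ clDelta P δ B ↔ ∃ n, δ^[n] a ∈ P.cl (Jinf δ B ∪ Jlt δ {a} n) := by
  refine ⟨fun ha => ?_, fun ⟨n, hn⟩ => ?_⟩
  · by_contra! h
    obtain ⟨K, hK⟩ := P.clRank_lt_aleph0_iff.1 ha
    obtain ⟨hi, hcard⟩ := P.clIndep_Jlt_of_forall_iterate_notMem h (K + 1)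
    have := hK _ (Jlt_subset_Jinf δ _ _) hi (Jlt_finite δ (finite_singleton a) _)
    omega
  · exact P.clRank_lt_aleph0_of_subset_cl (Jlt_finite δ (finite_singleton a) n)
      (P.Jinf_subset_cl_of_iterate_mem_cl hδ (image_Jinf_subset δ B) hn)

lemma exists_Jinf_subset_cl_of_mem_clDelta (hδ : IsQuasiEndo P δ) (ha : a ∈ clDelta P δ B) :
    ∃ W : Set X, W.Finite ∧ Jinf δ {a} ⊆ P.cl (Jinf δ B ∪ W) := by
  obtain ⟨n, hn⟩ := (P.mem_clDelta_iff_exists_iterate_mem_cl hδ).1 ha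
  exact ⟨_, Jlt_finite δ (finite_singleton a) n,
    P.Jinf_subset_cl_of_iterate_mem_cl hδ (image_Jinf_subset δ B) hn⟩

lemma exists_Jinf_subset_cl_of_subset_clDelta (hδ : IsQuasiEndo P δ) (hF : F.Finite)
    (h : F ⊆ clDelta P δ B) : ∃ W : Set X, W.Finite ∧ Jinf δ F ⊆ P.cl (Jinf δ B ∪ W) := by
  induction F, hF using Set.Finite.induction_on with
  | empty => exact ⟨∅, finite_empty, by simp [Jinf]⟩
  | @insert c F _ _ ih =>
    obtain ⟨W, hW, hFW⟩ := ih ((subset_insert c F).trans h)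
    obtain ⟨V, hV, hcV⟩ := P.exists_Jinf_subset_cl_of_mem_clDelta hδ (h (mem_insert c F))
    refine ⟨V ∪ W, hV.union hW, ?_⟩
    rw [insert_eq, Jinf_union]
    exact union_subset (hcV.trans (P.mono _ _ (union_subset_union_right _ subset_union_left)))
      (hFW.trans (P.mono _ _ (union_subset_union_right _ subset_union_right)))

lemma subset_clDelta (δ : X → X) (B : Set X) : B ⊆ clDelta P δ B := fun a ha =>
  P.clRank_lt_aleph0_of_subset_cl finite_empty
    (by simpa using (Jinf_mono δ (singleton_subset_iff.2 ha)).trans (P.subset_cl _))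

lemma clDelta_mono (δ : X → X) (h : A ⊆ B) : clDelta P δ A ⊆ clDelta P δ B := fun a ha => by
  obtain ⟨K, hK⟩ := P.clRank_lt_aleph0_iff.1 ha
  exact P.clRank_lt_aleph0_iff.2
    ⟨K, fun S hS hi => hK S hS (P.clIndep_anti_base hi (Jinf_mono δ h))⟩

lemma exists_finset_of_mem_clDelta (hδ : IsQuasiEndo P δ) (ha : a ∈ clDelta P δ B) :
    ∃ F : Finset X, ↑F ⊆ B ∧ a ∈ clDelta P δ ↑F := by
  obtain ⟨n, hn⟩ := (P.mem_clDelta_iff_exists_iterate_mem_cl hδ).1 ha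
  obtain ⟨G, hG, haG⟩ := P.finitary _ _ hn
  obtain ⟨F, hFB, hGF⟩ :=
    exists_finset_subset_Jinf δ (G.finite_toSet.inter_of_left _) inter_subset_right
  refine ⟨F, hFB, (P.mem_clDelta_iff_exists_iterate_mem_cl hδ).2 ⟨n, P.mono _ _ (fun x hx => ?_) haG⟩⟩
  rcases hG hx with hxB | hxa
  · exact Or.inl (hGF ⟨hx, hxB⟩)
  · exact Or.inr hxa

lemma clDelta_clDelta (hδ : IsQuasiEndo P δ) (B : Set X) :
    clDelta P δ (clDelta P δ B) = clDelta P δ B := by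
  refine subset_antisymm (fun a ha => ?_) (P.subset_clDelta δ _)
  obtain ⟨F, hFB, haF⟩ := P.exists_finset_of_mem_clDelta hδ ha
  obtain ⟨W, hW, hFW⟩ := P.exists_Jinf_subset_cl_of_subset_clDelta hδ F.finite_toSet hFB
  obtain ⟨V, hV, haV⟩ := P.exists_Jinf_subset_cl_of_mem_clDelta hδ haF
  refine P.clRank_lt_aleph0_of_subset_cl (hW.union hV) (haV.trans (P.cl_subset_cl ?_))
  rw [← union_assoc]
  exact union_subset (hFW.trans (P.mono _ _ subset_union_left))
    (subset_union_right.trans (P.subset_cl _))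

/-- Otherwise the increments of `{a, b}` are all `2`, which makes `J^{<n}a` independent over
`C ∪ J^∞b` for every `n`. -/
lemma exists_jetInc_pair_le_one
    (h : clRank P.cl (Jinf δ {a}) (C ∪ Jinf δ {b}) < Cardinal.aleph0) :
    ∃ N, P.jetInc δ C {a, b} N ≤ 1 := by
  by_contra! hinc
  obtain ⟨K, hK⟩ := P.clRank_lt_aleph0_iff.1 h
  have hfa := Jlt_finite δ (finite_singleton a)
  have hfb := Jlt_finite δ (finite_singleton b)
  have hgrowth : ∀ n, 2 * n ≤ P.rk (Jlt δ {a, b} n) C := by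
    intro n
    induction n with
    | zero => simp
    | succ n ih =>
      rw [P.rk_Jlt_succ ((finite_singleton b).insert a)]
      have := hinc n
      omega
  have hindep : ∀ n, clIndep P.cl (C ∪ Jlt δ {b} n) (Jlt δ {a} n) ∧ n ≤ (Jlt δ {a} n).ncard := by
    intro n
    have hsplit := P.rk_union (C := C) (hfa n) (hfb n)
    rw [← Jlt_pair] at hsplit
    have hb := (P.rk_le_ncard (C := C) (hfb n)).trans (ncard_Jlt_singleton_le δ b n)
    have ha := P.rk_le_ncard (C := C ∪ Jlt δ {b} n) (hfa n)
    have := hgrowth n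
    have := ncard_Jlt_singleton_le δ a n
    exact ⟨P.clIndep_of_ncard_le_rk (hfa n) (by omega), by omega⟩
  have hlim : clIndep P.cl (C ∪ Jinf δ {b}) (Jlt δ {a} (K + 1)) := by
    rw [← iUnion_Jlt, union_iUnion]
    refine P.clIndep_iUnion_of_directed (monotone_const.union (Jlt_mono δ {b})).directed_le
      fun m => ?_
    rcases le_total m (K + 1) with hm | hm
    · exact P.clIndep_anti_base (hindep (K + 1)).1
        (union_subset_union_right _ (Jlt_mono δ _ hm))
    · exact P.clIndep_subset (hindep m).1 (Jlt_mono δ _ hm)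
  have := hK _ (Jlt_subset_Jinf δ _ _) hlim (hfa _)
  have := (hindep (K + 1)).2
  omega

lemma rk_Jlt_le_add (hδ : IsQuasiEndo P δ) (hC : δ '' C ⊆ C) (hF : F.Finite) {N : ℕ}
    (hN : P.jetInc δ C F N ≤ 1) (n : ℕ) : P.rk (Jlt δ F n) C ≤ P.rk (Jlt δ F N) C + n := by
  induction n with
  | zero => simpa using P.rk_mono (C := C) (Jlt_finite δ hF N) (empty_subset _)
  | succ n ih =>
    rcases le_or_gt N n with hNn | hnN
    · have := P.jetInc_antitone hδ hC hF hNn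
      rw [P.rk_Jlt_succ hF]
      omega
    · have := P.rk_mono (C := C) (Jlt_finite δ hF N) (Jlt_mono δ F (show n + 1 ≤ N from hnN))
      omega

lemma clDelta_exchange (hδ : IsQuasiEndo P δ) (a b : X) (A : Set X)
    (hab : a ∈ clDelta P δ (A ∪ {b})) (ha : a ∉ clDelta P δ A) : b ∈ clDelta P δ (A ∪ {a}) := by
  rw [mem_clDelta, Jinf_union] at hab ⊢
  set C := Jinf δ A
  have hC : δ '' C ⊆ C := image_Jinf_subset δ A
  have hfa := Jlt_finite δ (finite_singleton a)
  have hfb := Jlt_finite δ (finite_singleton b)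
  obtain ⟨N, hN⟩ := P.exists_jetInc_pair_le_one hab
  have ha_rk : ∀ n, n ≤ P.rk (Jlt δ {a} n) C := fun n => by
    obtain ⟨hi, hcard⟩ := P.clIndep_Jlt_of_forall_iterate_notMem
      (fun m hm => ha ((P.mem_clDelta_iff_exists_iterate_mem_cl hδ).2 ⟨m, hm⟩)) n
    simpa only [hcard] using P.le_rk (hfa n) subset_rfl hi
  have hbound : ∀ n, P.rk (Jlt δ {b} n) (C ∪ Jlt δ {a} n) ≤ P.rk (Jlt δ {a, b} N) C := by
    intro n
    have hsplit := P.rk_union (C := C) (hfb n) (hfa n)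
    rw [union_comm, ← Jlt_pair] at hsplit
    have := P.rk_Jlt_le_add hδ hC ((finite_singleton b).insert a) hN n
    have := ha_rk n
    omega
  refine P.clRank_lt_aleph0_iff.2 ⟨P.rk (Jlt δ {a, b} N) C, fun S hS hi hSfin => ?_⟩
  obtain ⟨n, hn⟩ := exists_subset_Jlt δ hSfin hS
  exact (P.le_rk (hfb n) hn (P.clIndep_anti_base hi
    (union_subset_union_right _ (Jlt_subset_Jinf δ _ n)))).trans (hbound n)

end Pregeometry

/-- If `δ` is a quasi-endomorphism of a finitary matroid `(X, cl)`, then the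
`δ`-closure `cl^δ` is again a finitary matroid on `X`. -/
theorem clDelta_is_pregeometry {X : Type*} (P : Pregeometry X) (δ : X → X)
    (hδ : IsQuasiEndo P δ) :
    ∃ Q : Pregeometry X, Q.cl = clDelta P δ :=
  ⟨{ cl := clDelta P δ
     subset_cl := P.subset_clDelta δ
     mono := fun _ _ => P.clDelta_mono δ
     cl_cl := P.clDelta_clDelta hδ
     finitary := fun _ _ => P.exists_finset_of_mem_clDelta hδ
     exchange := P.clDelta_exchange hδ }, rfl⟩
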